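/- arXiv:2011.10068 — 2 statements merged into one kernel-verified Lean document; each statement's English description precedes it below -/
import Mathlib

section
/- Consider the real-time utility U(z) = C(z, ω) + p_s·C_k - p_e·max(C_k - z, 0) where C(z, ω) = ω(s - z) - (α/2)(s - z)² for s - z ≤ ω/α and C(z,ω) = ω²/(2α) otherwise, with 0 < p_e < ω and α > 0. Let z₁ = s - ω/α and z₂ = s - (ω - p_e)/α. Then the maximizer z* of U over [0, s] (assuming 0 ≤ z₁ and z₂ ≤ s) satisfies: z* = z₁ if C_k < z₁; z* = z₂ if C_k > z₂; and z* = C_k if z₁ ≤ C_k ≤ z₂. -/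
/-!
Writing `z₁ = s - ω/α`, the convenience term is `ω²/(2α) - (α/2)·((z - z₁)₊)²`, so maximizing `U`
amounts to minimizing the convex loss `(α/2)·((z - z₁)₊)² + p_e·(C_k - z)₊` over all of `ℝ`.
The quadratic part has slope `α·(z - z₁)` to the right of `z₁`, which reaches the penalty slope
`p_e` exactly at `z₂`; comparing with a tangent line of the quadratic part at the claimed
minimizer `C_k` clamped to `[z₁, z₂]` settles each case.
-/

/-- The loss `ω²/(2α) + p_s C_k - U z` of the real-time decision `z`. -/
noncomputable def sellbackLoss (α pe z1 Ck z : ℝ) : ℝ :=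
  α * max (z - z1) 0 ^ 2 / 2 + pe * max (Ck - z) 0

theorem convenience_eq_sub_sq {α : ℝ} (hα : α ≠ 0) (ω s z : ℝ) :
    (if s - z ≤ ω / α then ω * (s - z) - α * (s - z) ^ 2 / 2 else ω ^ 2 / (2 * α)) =
      ω ^ 2 / (2 * α) - α * max (z - (s - ω / α)) 0 ^ 2 / 2 := by
  split_ifs with h
  · rw [max_eq_left (by linarith)]
    field_simp
    ring
  · rw [max_eq_right (by linarith)]
    ring

theorem sq_max_zero_tangent_le {t : ℝ} (ht : 0 ≤ t) (x : ℝ) :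
    t ^ 2 + 2 * t * (x - t) ≤ max x 0 ^ 2 := by
  rcases le_total 0 x with hx | hx
  · rw [max_eq_left hx]
    nlinarith [sq_nonneg (x - t)]
  · rw [max_eq_right hx]
    nlinarith [mul_nonneg ht (neg_nonneg.mpr hx)]

section sellbackLoss

variable {α pe z1 Ck : ℝ}

theorem sellbackLoss_le_of_le_left (hα : 0 ≤ α) (hpe : 0 ≤ pe) (hCk : Ck ≤ z1) (z : ℝ) :
    sellbackLoss α pe z1 Ck z1 ≤ sellbackLoss α pe z1 Ck z := by
  have hz1 : sellbackLoss α pe z1 Ck z1 = 0 := by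
    simp [sellbackLoss, max_eq_right (sub_nonpos.mpr hCk)]
  rw [hz1, sellbackLoss]
  positivity

theorem sellbackLoss_le_of_mem_Icc (hα : 0 ≤ α) (hz1 : z1 ≤ Ck) (hslope : α * (Ck - z1) ≤ pe)
    (z : ℝ) : sellbackLoss α pe z1 Ck Ck ≤ sellbackLoss α pe z1 Ck z := by
  have htangent := mul_le_mul_of_nonneg_left
    (sq_max_zero_tangent_le (sub_nonneg.mpr hz1) (z - z1)) hα
  have hpenalty : α * (Ck - z1) * (Ck - z) ≤ pe * max (Ck - z) 0 :=
    (mul_le_mul_of_nonneg_left (le_max_left _ _) (by positivity)).trans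
      (mul_le_mul_of_nonneg_right hslope (le_max_right _ _))
  simp only [sellbackLoss, sub_self, max_self, mul_zero, add_zero,
    max_eq_left (sub_nonneg.mpr hz1)]
  nlinarith

theorem sellbackLoss_le_of_right_le {z2 : ℝ} (hα : 0 ≤ α) (hz12 : z1 ≤ z2)
    (hslope : α * (z2 - z1) = pe) (hCk : z2 ≤ Ck) (z : ℝ) :
    sellbackLoss α pe z1 Ck z2 ≤ sellbackLoss α pe z1 Ck z := by
  subst hslope
  have htangent := mul_le_mul_of_nonneg_left
    (sq_max_zero_tangent_le (sub_nonneg.mpr hz12) (z - z1)) hα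
  have hpenalty : α * (z2 - z1) * (Ck - z) ≤ α * (z2 - z1) * max (Ck - z) 0 :=
    mul_le_mul_of_nonneg_left (le_max_left _ _) (mul_nonneg hα (sub_nonneg.mpr hz12))
  simp only [sellbackLoss, max_eq_left (sub_nonneg.mpr hz12), max_eq_left (sub_nonneg.mpr hCk)]
  nlinarith

end sellbackLoss

theorem realtime_optimal_sellback_general (α ω pe ps s Ck : ℝ)
    (hα : 0 < α) (hpe : 0 < pe)
    (Cv U : ℝ → ℝ)
    (hCv : ∀ z : ℝ, Cv z =
      if s - z ≤ ω / α then ω * (s - z) - α * (s - z) ^ 2 / 2 else ω ^ 2 / (2 * α))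
    (hU : ∀ z : ℝ, U z = Cv z + ps * Ck - pe * max (Ck - z) 0)
    (z1 z2 : ℝ) (hz1 : z1 = s - ω / α) (hz2 : z2 = s - (ω - pe) / α) :
    (Ck < z1 → ∀ z ∈ Set.Icc (0 : ℝ) s, U z ≤ U z1) ∧
    (z2 < Ck → ∀ z ∈ Set.Icc (0 : ℝ) s, U z ≤ U z2) ∧
    (z1 ≤ Ck → Ck ≤ z2 → ∀ z ∈ Set.Icc (0 : ℝ) s, U z ≤ U Ck) := by
  have hUloss : ∀ z, U z = ω ^ 2 / (2 * α) + ps * Ck - sellbackLoss α pe z1 Ck z := by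
    intro z
    rw [hU, hCv, convenience_eq_sub_sq hα.ne', ← hz1, sellbackLoss]
    ring
  have hslope : α * (z2 - z1) = pe := by
    rw [hz1, hz2]
    field_simp
    ring
  have hz12 : z1 ≤ z2 := by nlinarith
  refine ⟨fun hCk z _ => ?_, fun hCk z _ => ?_, fun hz1Ck hCkz2 z _ => ?_⟩ <;> rw [hUloss, hUloss]
  · linarith [sellbackLoss_le_of_le_left hα.le hpe.le hCk.le z]
  · linarith [sellbackLoss_le_of_right_le hα.le hz12 hslope hCk.le z]
  · have hCkslope : α * (Ck - z1) ≤ pe := hslope ▸ mul_le_mul_of_nonneg_left (by linarith) hα.le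
    linarith [sellbackLoss_le_of_mem_Icc hα.le hz1Ck hCkslope z]

/-- Real-time decision (Observation 1): with utility
`U(z) = C(z,ω) + p_s C_k - p_e max(C_k - z, 0)`, where `C` is the convenience function of
the residual consumption `s - z`, the maximizer of `U` over `[0, s]` is `z₁ = s - ω/α`
if `C_k < z₁`, `z₂ = s - (ω - p_e)/α` if `C_k > z₂`, and `C_k` otherwise. -/
theorem realtime_optimal_sellback (α ω pe ps s Ck : ℝ)
    (hα : 0 < α) (hpe : 0 < pe) (hpeω : pe < ω) (hs : ω / α ≤ s) (hCk : 0 ≤ Ck)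
    (Cv U : ℝ → ℝ)
    (hCv : ∀ z : ℝ, Cv z =
      if s - z ≤ ω / α then ω * (s - z) - α * (s - z) ^ 2 / 2 else ω ^ 2 / (2 * α))
    (hU : ∀ z : ℝ, U z = Cv z + ps * Ck - pe * max (Ck - z) 0)
    (z1 z2 : ℝ) (hz1 : z1 = s - ω / α) (hz2 : z2 = s - (ω - pe) / α) (hz2s : z2 ≤ s) :
    (Ck < z1 → ∀ z ∈ Set.Icc (0 : ℝ) s, U z ≤ U z1) ∧
    (z2 < Ck → ∀ z ∈ Set.Icc (0 : ℝ) s, U z ≤ U z2) ∧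
    (z1 ≤ Ck → Ck ≤ z2 → ∀ z ∈ Set.Icc (0 : ℝ) s, U z ≤ U Ck) :=
  realtime_optimal_sellback_general α ω pe ps s Ck hα hpe Cv U hCv hU z1 z2 hz1 hz2
end

section
/- Let F_s be a strictly increasing continuous CDF and π(q) = exp(-(-log q)^γ) with 0 < γ < 1, λ > 1. If 0 < p_s < p_e/e then F_s^{-1}(π^{-1}(p_s/(λ p_e))) < F_s^{-1}(p_s/p_e); i.e., the prospect-theory contract C_PT = F_s^{-1}(π^{-1}(p_s/(λ p_e))) + (p_e - ω)/α is strictly smaller than the EUT contract C_EUT = F_s^{-1}(p_s/p_e) + (p_e - ω)/α. -/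
/-- Corollary 1: if `p_s < p_e/e` then `F_s⁻¹(π⁻¹(p_s/(λ p_e))) < F_s⁻¹(p_s/p_e)`, i.e. the
prospect-theory contract is strictly smaller than the EUT contract. Stated via preimages:
if `a, b ∈ [s_min, s_max]` satisfy `π(F_s(a)) = p_s/(λ p_e)` and `F_s(b) = p_s/p_e`, then
`a + (p_e - ω)/α < b + (p_e - ω)/α`. -/
theorem pt_contract_smaller (γ lam ps pe α ω smin smax : ℝ)
    (hγ0 : 0 < γ) (hγ1 : γ < 1) (hlam : 1 < lam) (hα : 0 < α) (hω : 0 < ω)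
    (hps : 0 < ps) (hpe : 0 < pe) (hthr : ps < pe / Real.exp 1)
    (hss : smin < smax)
    (Fs : ℝ → ℝ)
    (hFscont : ContinuousOn Fs (Set.Icc smin smax))
    (hFsmono : StrictMonoOn Fs (Set.Icc smin smax))
    (hFs0 : Fs smin = 0) (hFs1 : Fs smax = 1)
    (a b : ℝ) (ha : a ∈ Set.Icc smin smax) (hb : b ∈ Set.Icc smin smax)
    (hFa : Real.exp (-((-Real.log (Fs a)) ^ γ)) = ps / (lam * pe))
    (hFb : Fs b = ps / pe) :
    a + (pe - ω) / α < b + (pe - ω) / α := by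
  have hsm : smin ∈ Set.Icc smin smax := ⟨le_refl _, hss.le⟩
  have hsM : smax ∈ Set.Icc smin smax := ⟨hss.le, le_refl _⟩
  -- Fs b = ps/pe ∈ (0, exp(-1))
  have hb0 : 0 < Fs b := by rw [hFb]; positivity
  have hbe : Fs b < Real.exp (-1) := by
    rw [hFb, Real.exp_neg, div_lt_iff₀ hpe, inv_mul_eq_div, lt_div_iff₀ (Real.exp_pos 1)]
    rw [lt_div_iff₀ (Real.exp_pos 1)] at hthr
    linarith
  -- hence -log (Fs b) > 1
  have hlogb : 1 < -Real.log (Fs b) := by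
    have := Real.log_lt_log hb0 hbe
    rw [Real.log_exp] at this; linarith
  -- π(Fs b) > Fs b
  have hpib : Fs b < Real.exp (-((-Real.log (Fs b)) ^ γ)) := by
    have h1 : (-Real.log (Fs b)) ^ γ < (-Real.log (Fs b)) ^ (1 : ℝ) :=
      Real.rpow_lt_rpow_of_exponent_lt hlogb hγ1
    rw [Real.rpow_one] at h1
    have : Real.log (Fs b) < -((-Real.log (Fs b)) ^ γ) := by linarith
    calc Fs b = Real.exp (Real.log (Fs b)) := (Real.exp_log hb0).symm
    _ < _ := Real.exp_lt_exp.mpr this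
  -- π(Fs a) < Fs b
  have hpia : Real.exp (-((-Real.log (Fs a)) ^ γ)) < Fs b := by
    rw [hFa, hFb]
    rw [div_lt_div_iff₀ (by positivity) hpe]
    have : ps * pe < ps * (lam * pe) := by
      have := mul_lt_mul_of_pos_left hlam (mul_pos hps hpe)
      calc ps * pe = ps * pe * 1 := by ring
      _ < ps * pe * lam := by nlinarith
      _ = ps * (lam * pe) := by ring
    linarith
  -- conclude Fs a < Fs b
  have hab : Fs a < Fs b := by
    by_contra h
    push_neg at h
    have hga : Fs a ≤ 1 := by
      rw [← hFs1]; exact hFsmono.monotoneOn ha hsM ha.2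
    have hloga : -Real.log (Fs a) ≤ -Real.log (Fs b) := by
      have := Real.log_le_log hb0 h
      linarith
    have hla0 : Real.log (Fs a) ≤ 0 := Real.log_nonpos (by linarith) hga
    have hmono : (-Real.log (Fs a)) ^ γ ≤ (-Real.log (Fs b)) ^ γ :=
      Real.rpow_le_rpow (by linarith) hloga hγ0.le
    have : Real.exp (-((-Real.log (Fs b)) ^ γ)) ≤
        Real.exp (-((-Real.log (Fs a)) ^ γ)) :=
      Real.exp_le_exp.mpr (by linarith)
    linarith
  have : a < b := by
    by_contra h
    push_neg at h
    exact absurd (hFsmono.monotoneOn hb ha h) (not_le.mpr hab)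
  linarith
end
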